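/- arXiv:2601.15564 — 4 statements merged into one kernel-verified Lean document; each statement's English description precedes it below -/
import Mathlib

section
/- Let f : [z, y] → ℝ be a positive monotone function with f' piecewise continuous, let c : ℕ → ℝ be an arithmetic function, g a differentiable function, and E a constant such that for all x, w with z ≤ x < w ≤ y we have ∑_{x ≤ n < w} c(n) ≤ g(w) − g(x) + E. Then ∑_{z ≤ n < y} c(n)·f(n) ≤ ∫_z^y f(t)·g'(t) dt + E·max(f(z), f(y)). -/
open Finset MeasureTheory

/-!
Abel summation against the tail sums `S t = ∑_{t ≤ n < y} c n` gives
`∑ c n f n = S z * f z + ∫ S f'`. As `f'` has constant sign, a bound on `S t` can be inserted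
under the integral: from `hsum` with `w = y` when `f` increases, and from `hsum` with `x = z`,
through `S t = S z - ∑_{z ≤ n < t} c n`, when `f` decreases. Integrating `g f'` by parts then
leaves `∫ f g'` plus the boundary term `E f(y)`, resp. `E f(z)`.
-/

lemma filter_range_ceil_eq_Ico (x w : ℝ) :
    (range ⌈w⌉₊).filter (fun n : ℕ => x ≤ (n : ℝ) ∧ (n : ℝ) < w) = Ico ⌈x⌉₊ ⌈w⌉₊ := by
  ext n
  simp only [mem_filter, mem_range, mem_Ico, Nat.ceil_le, Nat.lt_ceil]
  tauto

lemma integral_eq_sub_of_hasDerivWithinAt_Icc {E : Type*} [NormedAddCommGroup E]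
    [NormedSpace ℝ E] [CompleteSpace E] {f f' : ℝ → E} {a b : ℝ} (hab : a ≤ b)
    (hf : ∀ t ∈ Set.Icc a b, HasDerivWithinAt f (f' t) (Set.Icc a b) t)
    (hf' : IntervalIntegrable f' volume a b) :
    ∫ t in a..b, f' t = f b - f a :=
  intervalIntegral.integral_eq_sub_of_hasDerivAt_of_le hab
    (fun t ht => (hf t ht).continuousWithinAt)
    (fun t ht => (hf t (Set.Ioo_subset_Icc_self ht)).hasDerivAt (Icc_mem_nhds ht.1 ht.2)) hf'

section PartialSummation

variable {c : ℕ → ℝ} {f f' g g' : ℝ → ℝ} {z y : ℝ}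

lemma intervalIntegrable_indicator_le (hf' : IntervalIntegrable f' volume z y) (a : ℝ) :
    IntervalIntegrable ({x : ℝ | x ≤ a}.indicator f') volume z y :=
  ⟨hf'.1.indicator measurableSet_Iic, hf'.2.indicator measurableSet_Iic⟩

variable (c f') in
lemma tail_sum_mul_eq_sum_indicator {t : ℝ} (hzt : z ≤ t) :
    (∑ n ∈ Ico ⌈t⌉₊ ⌈y⌉₊, c n) * f' t =
      ∑ n ∈ Ico ⌈z⌉₊ ⌈y⌉₊, c n * {x : ℝ | x ≤ n}.indicator f' t := by
  have htail : (Ico ⌈z⌉₊ ⌈y⌉₊).filter (fun n : ℕ => t ≤ n) = Ico ⌈t⌉₊ ⌈y⌉₊ := by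
    have := Nat.ceil_le_ceil hzt
    ext n
    simp only [mem_filter, mem_Ico, ← Nat.ceil_le]
    omega
  rw [← htail, sum_filter, sum_mul]
  refine sum_congr rfl fun n _ => ?_
  by_cases h : t ≤ n <;> simp [h]

lemma intervalIntegrable_tail_sum_mul (hzy : z ≤ y) (hf' : IntervalIntegrable f' volume z y) :
    IntervalIntegrable (fun t => (∑ n ∈ Ico ⌈t⌉₊ ⌈y⌉₊, c n) * f' t) volume z y := by
  refine (IntervalIntegrable.sum (Ico ⌈z⌉₊ ⌈y⌉₊)
    fun n _ => (intervalIntegrable_indicator_le hf' n).const_mul (c n)).congr fun t ht => ?_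
  rw [Set.uIoc_of_le hzy] at ht
  simp only [Finset.sum_apply]
  exact (tail_sum_mul_eq_sum_indicator c f' ht.1.le).symm

theorem sum_mul_eq_tail_sum_mul_add_integral (hzy : z ≤ y)
    (hf : ∀ t ∈ Set.Icc z y, HasDerivWithinAt f (f' t) (Set.Icc z y) t)
    (hf' : IntervalIntegrable f' volume z y) :
    ∑ n ∈ Ico ⌈z⌉₊ ⌈y⌉₊, c n * f n =
      (∑ n ∈ Ico ⌈z⌉₊ ⌈y⌉₊, c n) * f z + ∫ t in z..y, (∑ n ∈ Ico ⌈t⌉₊ ⌈y⌉₊, c n) * f' t := by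
  have hint : ∀ n ∈ Ico ⌈z⌉₊ ⌈y⌉₊,
      ∫ t in z..y, c n * {x : ℝ | x ≤ n}.indicator f' t = c n * (f n - f z) := by
    intro n hn
    rw [mem_Ico, Nat.ceil_le, Nat.lt_ceil] at hn
    have hnI : (n : ℝ) ∈ Set.Icc z y := ⟨hn.1, hn.2.le⟩
    rw [intervalIntegral.integral_const_mul, intervalIntegral.integral_indicator hnI,
      integral_eq_sub_of_hasDerivWithinAt_Icc hn.1
      (fun t ht => (hf t ⟨ht.1, ht.2.trans hnI.2⟩).mono (Set.Icc_subset_Icc_right hnI.2))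
      (hf'.mono_set (by
        rw [Set.uIcc_of_le hn.1, Set.uIcc_of_le hzy]; exact Set.Icc_subset_Icc_right hnI.2))]
  rw [intervalIntegral.integral_congr fun t ht =>
      tail_sum_mul_eq_sum_indicator c f' (Set.uIcc_of_le hzy ▸ ht).1,
    intervalIntegral.integral_finsetSum fun n _ => ?_, sum_congr rfl hint]
  · simp only [mul_sub, sum_sub_distrib, sum_mul]
    ring
  · exact (intervalIntegrable_indicator_le hf' n).const_mul _

theorem integral_const_sub_mul_deriv (K : ℝ) (hzy : z ≤ y)
    (hf : ∀ t ∈ Set.Icc z y, HasDerivWithinAt f (f' t) (Set.Icc z y) t)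
    (hg : ∀ t ∈ Set.Icc z y, HasDerivWithinAt g (g' t) (Set.Icc z y) t)
    (hf' : IntervalIntegrable f' volume z y) (hg' : IntervalIntegrable g' volume z y) :
    ∫ t in z..y, (K - g t) * f' t =
      (K - g y) * f y - (K - g z) * f z + ∫ t in z..y, f t * g' t := by
  rw [← Set.uIcc_of_le hzy] at hf hg
  rw [intervalIntegral.integral_mul_deriv_eq_deriv_mul_of_hasDerivWithinAt
    (fun t ht => (hg t ht).const_sub K) hf hg'.neg hf']
  simp only [neg_mul, intervalIntegral.integral_neg, mul_comm (g' _)]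
  ring

variable {E : ℝ}

theorem sum_mul_le_of_monotoneOn (hzy : z < y)
    (hf : ∀ t ∈ Set.Icc z y, HasDerivWithinAt f (f' t) (Set.Icc z y) t)
    (hg : ∀ t ∈ Set.Icc z y, HasDerivWithinAt g (g' t) (Set.Icc z y) t)
    (hf' : IntervalIntegrable f' volume z y) (hg' : IntervalIntegrable g' volume z y)
    (hmono : MonotoneOn f (Set.Icc z y)) (hfz : 0 ≤ f z)
    (htail : ∀ t ∈ Set.Ico z y, ∑ n ∈ Ico ⌈t⌉₊ ⌈y⌉₊, c n ≤ g y - g t + E) :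
    ∑ n ∈ Ico ⌈z⌉₊ ⌈y⌉₊, c n * f n ≤ (∫ t in z..y, f t * g' t) + E * f y := by
  have hf'_nonneg : ∀ t ∈ Set.Icc z y, 0 ≤ f' t := fun t ht =>
    (hf t ht).derivWithin (uniqueDiffOn_Icc hzy t ht) ▸ hmono.derivWithin_nonneg
  have hgc : ContinuousOn g (Set.uIcc z y) := by
    rw [Set.uIcc_of_le hzy.le]; exact fun t ht => (hg t ht).continuousWithinAt
  have hint : ∫ t in z..y, (∑ n ∈ Ico ⌈t⌉₊ ⌈y⌉₊, c n) * f' t ≤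
      ∫ t in z..y, (g y + E - g t) * f' t :=
    intervalIntegral.integral_mono_on_of_le_Ioo hzy.le
      (intervalIntegrable_tail_sum_mul hzy.le hf')
      (hf'.continuousOn_mul (continuousOn_const.sub hgc)) fun t ht =>
        mul_le_mul_of_nonneg_right (by linarith [htail t ⟨ht.1.le, ht.2⟩])
          (hf'_nonneg t (Set.Ioo_subset_Icc_self ht))
  have hz := mul_le_mul_of_nonneg_right (htail z ⟨le_rfl, hzy⟩) hfz
  rw [sum_mul_eq_tail_sum_mul_add_integral hzy.le hf hf']
  rw [integral_const_sub_mul_deriv _ hzy.le hf hg hf' hg'] at hint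
  linarith

theorem sum_mul_le_of_antitoneOn (hzy : z < y)
    (hf : ∀ t ∈ Set.Icc z y, HasDerivWithinAt f (f' t) (Set.Icc z y) t)
    (hg : ∀ t ∈ Set.Icc z y, HasDerivWithinAt g (g' t) (Set.Icc z y) t)
    (hf' : IntervalIntegrable f' volume z y) (hg' : IntervalIntegrable g' volume z y)
    (hanti : AntitoneOn f (Set.Icc z y)) (hfy : 0 ≤ f y)
    (hhead : ∀ t ∈ Set.Ioc z y, ∑ n ∈ Ico ⌈z⌉₊ ⌈t⌉₊, c n ≤ g t - g z + E) :
    ∑ n ∈ Ico ⌈z⌉₊ ⌈y⌉₊, c n * f n ≤ (∫ t in z..y, f t * g' t) + E * f z := by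
  set A := ∑ n ∈ Ico ⌈z⌉₊ ⌈y⌉₊, c n
  have hf'_nonpos : ∀ t ∈ Set.Icc z y, f' t ≤ 0 := fun t ht =>
    (hf t ht).derivWithin (uniqueDiffOn_Icc hzy t ht) ▸ hanti.derivWithin_nonpos
  have hgc : ContinuousOn g (Set.uIcc z y) := by
    rw [Set.uIcc_of_le hzy.le]; exact fun t ht => (hg t ht).continuousWithinAt
  have htail : ∀ t ∈ Set.Ioc z y, A - (g t - g z + E) ≤ ∑ n ∈ Ico ⌈t⌉₊ ⌈y⌉₊, c n := by
    intro t ht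
    have := sum_Ico_consecutive c (Nat.ceil_le_ceil ht.1.le) (Nat.ceil_le_ceil ht.2)
    linarith [hhead t ht]
  have hint : ∫ t in z..y, (∑ n ∈ Ico ⌈t⌉₊ ⌈y⌉₊, c n) * f' t ≤
      ∫ t in z..y, (A + g z - E - g t) * f' t :=
    intervalIntegral.integral_mono_on_of_le_Ioo hzy.le
      (intervalIntegrable_tail_sum_mul hzy.le hf')
      (hf'.continuousOn_mul (continuousOn_const.sub hgc)) fun t ht =>
        mul_le_mul_of_nonpos_right (by linarith [htail t ⟨ht.1, ht.2.le⟩])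
          (hf'_nonpos t (Set.Ioo_subset_Icc_self ht))
  have hy := mul_le_mul_of_nonneg_right (hhead y ⟨hzy, le_rfl⟩) hfy
  rw [sum_mul_eq_tail_sum_mul_add_integral hzy.le hf hf']
  rw [integral_const_sub_mul_deriv _ hzy.le hf hg hf' hg'] at hint
  linarith

end PartialSummation

theorem partial_summation_bound_general
    (z y : ℝ) (hzy : z < y)
    (f f' g g' : ℝ → ℝ) (c : ℕ → ℝ) (E : ℝ)
    (hfpos : ∀ t ∈ Set.Icc z y, 0 < f t)
    (hfmono : MonotoneOn f (Set.Icc z y) ∨ AntitoneOn f (Set.Icc z y))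
    (hfderiv : ∀ t ∈ Set.Icc z y, HasDerivWithinAt f (f' t) (Set.Icc z y) t)
    (hf'cont : ∀ t ∈ Set.Icc z y, ContinuousWithinAt f' (Set.Icc z y) t)
    (hgderiv : ∀ t ∈ Set.Icc z y, HasDerivWithinAt g (g' t) (Set.Icc z y) t)
    (hg'cont : ∀ t ∈ Set.Icc z y, ContinuousWithinAt g' (Set.Icc z y) t)
    (hsum : ∀ x w : ℝ, z ≤ x → x < w → w ≤ y →
      ∑ n ∈ (Finset.range ⌈w⌉₊).filter (fun (n : ℕ) => x ≤ (n : ℝ) ∧ (n : ℝ) < w), c n ≤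
        g w - g x + E) :
    ∑ n ∈ (Finset.range ⌈y⌉₊).filter (fun (n : ℕ) => z ≤ (n : ℝ) ∧ (n : ℝ) < y),
        c n * f n ≤
      (∫ t in z..y, f t * g' t) + E * max (f z) (f y) := by
  have hf' := ContinuousOn.intervalIntegrable_of_Icc (μ := volume) hzy.le hf'cont
  have hg' := ContinuousOn.intervalIntegrable_of_Icc (μ := volume) hzy.le hg'cont
  simp only [filter_range_ceil_eq_Ico] at hsum ⊢
  rcases hfmono with hmono | hanti
  · rw [max_eq_right (hmono ⟨le_rfl, hzy.le⟩ ⟨hzy.le, le_rfl⟩ hzy.le)]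
    exact sum_mul_le_of_monotoneOn hzy hfderiv hgderiv hf' hg' hmono
      (hfpos z ⟨le_rfl, hzy.le⟩).le fun t ht => hsum t y ht.1 ht.2 le_rfl
  · rw [max_eq_left (hanti ⟨le_rfl, hzy.le⟩ ⟨hzy.le, le_rfl⟩ hzy.le)]
    exact sum_mul_le_of_antitoneOn hzy hfderiv hgderiv hf' hg' hanti
      (hfpos y ⟨hzy.le, le_rfl⟩).le fun t ht => hsum z t le_rfl ht.1 ht.2

theorem partial_summation_bound
    (z y : ℝ) (hzy : z < y) (hz : 0 < z)
    (f f' g g' : ℝ → ℝ) (c : ℕ → ℝ) (E : ℝ)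
    (hfpos : ∀ t ∈ Set.Icc z y, 0 < f t)
    (hfmono : MonotoneOn f (Set.Icc z y) ∨ AntitoneOn f (Set.Icc z y))
    (hfderiv : ∀ t ∈ Set.Icc z y, HasDerivWithinAt f (f' t) (Set.Icc z y) t)
    (hf'cont : ∀ t ∈ Set.Icc z y, ContinuousWithinAt f' (Set.Icc z y) t)
    (hgderiv : ∀ t ∈ Set.Icc z y, HasDerivWithinAt g (g' t) (Set.Icc z y) t)
    (hg'cont : ∀ t ∈ Set.Icc z y, ContinuousWithinAt g' (Set.Icc z y) t)
    (hsum : ∀ x w : ℝ, z ≤ x → x < w → w ≤ y →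
      ∑ n ∈ (Finset.range ⌈w⌉₊).filter (fun (n : ℕ) => x ≤ (n : ℝ) ∧ (n : ℝ) < w), c n ≤
        g w - g x + E) :
    ∑ n ∈ (Finset.range ⌈y⌉₊).filter (fun (n : ℕ) => z ≤ (n : ℝ) ∧ (n : ℝ) < y),
        c n * f n ≤
      (∫ t in z..y, f t * g' t) + E * max (f z) (f y) :=
  partial_summation_bound_general z y hzy f f' g g' c E hfpos hfmono hfderiv hf'cont hgderiv hg'cont
    hsum
end

section
/- Suppose that for all 2 ≤ x ≤ 4·10^9 we have e^γ log x < ∏_{p ≤ x}(1 − 1/p)^{-1} < e^γ log x + 2e^γ/√x. Then for 3.5·10^5 ≤ z < 4·10^9 and 3 ≤ u ≤ z, ∏_{u ≤ p < z}(1 − 1/p)^{-1} ≤ ((log z)/(log u))·(1 + 2/(√z · log z)). -/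
/-!
Write `∏_{p < z} = ∏_{u ≤ p < z} · ∏_{p < u}`. A product over `p < y` equals the product over
`p ≤ x` for all `x` slightly below `y`, so letting `x → y⁻` turns the hypothesis into
`e^γ log u ≤ ∏_{p < u}` and `∏_{p < z} ≤ e^γ log z + 2 e^γ / √z`; divide.
-/

open Real Finset Filter Topology

noncomputable def eulerProdLE (x : ℝ) : ℝ :=
  ∏ p ∈ (range (⌊x⌋₊ + 1)).filter (fun p : ℕ => p.Prime ∧ (p : ℝ) ≤ x), (1 - 1 / (p : ℝ))⁻¹

/-- `∏_{p < y} (1 - 1/p)⁻¹`, provided `y ≤ N`. -/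
noncomputable def eulerProdLT (N : ℕ) (y : ℝ) : ℝ :=
  ∏ p ∈ (range N).filter (fun p : ℕ => p.Prime ∧ (p : ℝ) < y), (1 - 1 / (p : ℝ))⁻¹

lemma filter_range_lt_eq_filter_range_floor_le (P : ℕ → Prop) [DecidablePred P] {N : ℕ}
    {x y : ℝ} (hyN : y ≤ N) (hx : (⌈y⌉ : ℝ) - 1 ≤ x) (hxy : x < y) :
    (range N).filter (fun p => P p ∧ (p : ℝ) < y) =
      (range (⌊x⌋₊ + 1)).filter (fun p => P p ∧ (p : ℝ) ≤ x) := by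
  have hlt_iff (p : ℕ) : (p : ℝ) < y ↔ (p : ℝ) ≤ x := by
    refine ⟨fun h => ?_, fun h => h.trans_lt hxy⟩
    have : (p : ℤ) + 1 ≤ ⌈y⌉ := Int.lt_ceil.mpr (by exact_mod_cast h)
    have : (p : ℝ) + 1 ≤ ⌈y⌉ := by exact_mod_cast this
    linarith
  ext p
  simp only [mem_filter, mem_range, hlt_iff]
  constructor
  · rintro ⟨-, hP, hpx⟩
    exact ⟨Nat.lt_succ_of_le (Nat.le_floor hpx), hP, hpx⟩
  · rintro ⟨-, hP, hpx⟩
    exact ⟨by exact_mod_cast ((hlt_iff p).2 hpx).trans_le hyN, hP, hpx⟩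

lemma eventually_eulerProdLE_eq_eulerProdLT {N : ℕ} {y : ℝ} (hyN : y ≤ N) :
    ∀ᶠ x in 𝓝[<] y, eulerProdLE x = eulerProdLT N y := by
  filter_upwards [Ioo_mem_nhdsLT (show (⌈y⌉ : ℝ) - 1 < y by linarith [Int.ceil_lt_add_one y])]
    with x ⟨hx, hxy⟩
  rw [eulerProdLE, eulerProdLT, filter_range_lt_eq_filter_range_floor_le _ hyN hx.le hxy]

lemma le_eulerProdLT_of_forall_lt {f : ℝ → ℝ} {a y : ℝ} {N : ℕ}
    (hf : ContinuousWithinAt f (Set.Iio y) y) (hay : a < y) (hyN : y ≤ N)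
    (h : ∀ x, a ≤ x → x < y → f x ≤ eulerProdLE x) :
    f y ≤ eulerProdLT N y := by
  refine le_of_tendsto hf ?_
  filter_upwards [eventually_eulerProdLE_eq_eulerProdLT hyN, Ioo_mem_nhdsLT hay]
    with x hx ⟨hax, hxy⟩
  exact hx ▸ h x hax.le hxy

lemma eulerProdLT_le_of_forall_lt {f : ℝ → ℝ} {a y : ℝ} {N : ℕ}
    (hf : ContinuousWithinAt f (Set.Iio y) y) (hay : a < y) (hyN : y ≤ N)
    (h : ∀ x, a ≤ x → x < y → eulerProdLE x ≤ f x) :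
    eulerProdLT N y ≤ f y := by
  refine ge_of_tendsto hf ?_
  filter_upwards [eventually_eulerProdLE_eq_eulerProdLT hyN, Ioo_mem_nhdsLT hay]
    with x hx ⟨hax, hxy⟩
  exact hx ▸ h x hax.le hxy

lemma prod_filter_lt_eq_prod_filter_Ico_mul {ι α M : Type*} [LinearOrder α] [CommMonoid M]
    (s : Finset ι) (P : ι → Prop) [DecidablePred P] (v : ι → α) (f : ι → M) {u z : α}
    (huz : u ≤ z) :
    ∏ i ∈ s.filter (fun i => P i ∧ v i < z), f i =
      (∏ i ∈ s.filter (fun i => P i ∧ u ≤ v i ∧ v i < z), f i) *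
        ∏ i ∈ s.filter (fun i => P i ∧ v i < u), f i := by
  rw [← prod_filter_mul_prod_filter_not (s.filter _) (fun i => u ≤ v i), filter_filter,
    filter_filter]
  congr 2 <;> refine filter_congr fun i _ => ?_
  · tauto
  · exact ⟨fun ⟨⟨hP, _⟩, hvu⟩ => ⟨hP, not_le.mp hvu⟩,
      fun ⟨hP, hvu⟩ => ⟨⟨hP, hvu.trans_le huz⟩, not_le.mpr hvu⟩⟩

theorem mertens_ratio_conditional
    (hmertens : ∀ x : ℝ, 2 ≤ x → x ≤ 4e9 →
      Real.exp Real.eulerMascheroniConstant * Real.log x <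
        (∏ p ∈ (Finset.range (⌊x⌋₊ + 1)).filter
            (fun p => Nat.Prime p ∧ (p : ℝ) ≤ x), (1 - 1 / (p : ℝ))⁻¹) ∧
      (∏ p ∈ (Finset.range (⌊x⌋₊ + 1)).filter
          (fun p => Nat.Prime p ∧ (p : ℝ) ≤ x), (1 - 1 / (p : ℝ))⁻¹) <
        Real.exp Real.eulerMascheroniConstant * Real.log x +
          2 * Real.exp Real.eulerMascheroniConstant / Real.sqrt x)
    (u z : ℝ) (hz1 : 3.5e5 ≤ z) (hz2 : z < 4e9) (hu : 3 ≤ u) (huz : u ≤ z) :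
    ∏ p ∈ (Finset.range ⌈z⌉₊).filter
        (fun p => Nat.Prime p ∧ u ≤ (p : ℝ) ∧ (p : ℝ) < z),
        (1 - 1 / (p : ℝ))⁻¹ ≤
      (Real.log z / Real.log u) * (1 + 2 / (Real.sqrt z * Real.log z)) := by
  set E := exp eulerMascheroniConstant
  have hE : 0 < E := exp_pos _
  norm_num at hz1 hz2
  have hN : z ≤ ⌈z⌉₊ := Nat.le_ceil z
  have hlog_u : 0 < log u := log_pos (by linarith)
  have hlog_z : 0 < log z := log_pos (by linarith)
  have hcont_lower : ContinuousAt (fun x => E * log x) u := by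
    fun_prop (disch := positivity)
  have hcont_upper : ContinuousAt (fun x => E * log x + 2 * E / √x) z := by
    fun_prop (disch := positivity)
  have hlower : E * log u ≤ eulerProdLT ⌈z⌉₊ u :=
    le_eulerProdLT_of_forall_lt hcont_lower.continuousWithinAt (by linarith : 2 < u)
      (huz.trans hN) fun x hx _ => (hmertens x hx (by norm_num; linarith)).1.le
  have hupper : eulerProdLT ⌈z⌉₊ z ≤ E * log z + 2 * E / √z :=
    eulerProdLT_le_of_forall_lt hcont_upper.continuousWithinAt (by linarith : 2 < z) hN
      fun x hx _ => (hmertens x hx (by norm_num; linarith)).2.le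
  rw [eulerProdLT, prod_filter_lt_eq_prod_filter_Ico_mul _ _ _ _ huz, ← eulerProdLT] at hupper
  calc _ ≤ (E * log z + 2 * E / √z) / eulerProdLT ⌈z⌉₊ u :=
        (le_div_iff₀ ((by positivity : 0 < E * log u).trans_le hlower)).2 hupper
    _ ≤ (E * log z + 2 * E / √z) / (E * log u) :=
        div_le_div_of_nonneg_left (by positivity) (by positivity) hlower
    _ = _ := by field_simp
end

section
/- Let N ≥ 10^40 be an integer, A = {a ∈ ℤ : N < a < N + 3N^{2/3}}, X = max(A), z = X^{1/5}, y = X^{1/1.85}. Then the sum over primes q with z ≤ q < y of the number of elements of A divisible by q² is at most 0.03·|A|^{0.82}. -/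
/-!
Write `N = t ^ 75`, so that `A ⊆ (t⁷⁵, t⁷⁵ + 3 t⁵⁰)` and every `q` in the sum is at least `t¹⁵`.
For `q < t³⁰`, an interval of length `L` holds at most `L / q² + 1` multiples of `q²`, and
`∑_{q ≥ t¹⁵} q⁻² ≲ t⁻¹⁵`, so these `q` contribute `O(t³⁵)`. For `q ≥ t³⁰` count the other way
round: `a = q² m` with `1 ≤ m ≤ 2 t¹⁵`, and for fixed `m` two admissible `q < q'` satisfy
`(q' - q) · 2 t³⁰ ≤ (q'² - q²) m < 3 t⁵⁰`, so there are `O(t²⁰)` of them. Altogether the sum is at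
most `13 t³⁵`, which is below `0.03 |A| ^ 0.82` because `|A| ≥ t⁵⁰` and `t⁶ ≥ 1000`.
-/

open Real Finset

theorem Int.card_le_of_sub_le {S : Finset ℤ} {D : ℝ} (hD : 0 ≤ D)
    (h : ∀ a ∈ S, ∀ b ∈ S, a < b → ((b - a : ℤ) : ℝ) ≤ D) : (#S : ℝ) ≤ D + 1 := by
  rcases S.eq_empty_or_nonempty with rfl | hS
  · simp only [card_empty, Nat.cast_zero]; linarith
  set m := S.min' hS
  have hsub : S ⊆ Icc m (m + ⌊D⌋) := fun b hb => by
    have hmb : m ≤ b := S.min'_le b hb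
    rcases hmb.eq_or_lt with hmb | hmb
    · simp [← hmb, Int.floor_nonneg.mpr hD]
    have := Int.le_floor.mpr (h m (S.min'_mem hS) b hb hmb)
    simp only [mem_Icc]
    omega
  have hfloor : (0 : ℤ) ≤ ⌊D⌋ + 1 := by have := Int.floor_nonneg.mpr hD; omega
  calc (#S : ℝ) ≤ #(Icc m (m + ⌊D⌋)) := by exact_mod_cast card_le_card hsub
    _ = ⌊D⌋ + 1 := by
      rw [Int.card_Icc, add_assoc, add_sub_cancel_left]
      exact_mod_cast Int.toNat_of_nonneg hfloor
    _ ≤ D + 1 := by linarith [Int.floor_le D]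

theorem Int.sub_one_le_card_of_forall_mem {A : Finset ℤ} {α : ℤ} {L : ℝ}
    (hA : ∀ a : ℤ, (α : ℝ) < a → (a : ℝ) < α + L → a ∈ A) : L - 1 ≤ #A := by
  have hsub : Ioo α (α + ⌈L⌉) ⊆ A := fun a ha => by
    obtain ⟨hαa, haL⟩ := mem_Ioo.mp ha
    have haL : (a : ℝ) ≤ α + ⌈L⌉ - 1 := by exact_mod_cast Int.le_sub_one_iff.mpr haL
    exact hA a (by exact_mod_cast hαa) (by linarith [Int.ceil_lt_add_one L])
  calc L - 1 ≤ ⌈L⌉ - 1 := by linarith [Int.le_ceil L]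
    _ ≤ ((⌈L⌉ - 1).toNat : ℤ) := by exact_mod_cast Int.self_le_toNat _
    _ = #(Ioo α (α + ⌈L⌉)) := by rw [Int.card_Ioo, add_sub_cancel_left]; rfl
    _ ≤ #A := by exact_mod_cast card_le_card hsub

theorem Int.card_filter_dvd_le {S : Finset ℤ} {α L : ℝ} (hL : 0 ≤ L)
    (hS : ∀ a ∈ S, α < a ∧ a < α + L) {d : ℤ} (hd : 0 < d) :
    (#{a ∈ S | d ∣ a} : ℝ) ≤ L / d + 1 := by
  have hd' : (0 : ℝ) < d := by exact_mod_cast hd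
  have hinj : Set.InjOn (· / d) ({a ∈ S | d ∣ a} : Finset ℤ) := fun a ha b hb hab => by
    rw [coe_filter] at ha hb
    rw [← Int.mul_ediv_cancel' ha.2, ← Int.mul_ediv_cancel' hb.2]
    exact congrArg (d * ·) hab
  rw [← card_image_of_injOn hinj]
  refine Int.card_le_of_sub_le (by positivity) ?_
  simp only [mem_image, mem_filter]
  rintro _ ⟨a, ⟨ha, hda⟩, rfl⟩ _ ⟨b, ⟨hb, hdb⟩, rfl⟩ -
  rw [Int.cast_sub, Int.cast_div hda hd'.ne', Int.cast_div hdb hd'.ne', ← sub_div]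
  gcongr
  linarith [hS a ha, hS b hb]

theorem Nat.card_sq_mul_mem_Ioo_le {S : Finset ℕ} {α L w m : ℝ} (hL : 0 ≤ L) (hw : 0 < w)
    (hm : 0 < m) (hS : ∀ q ∈ S, w ≤ q ∧ α < q ^ 2 * m ∧ q ^ 2 * m < α + L) :
    (#S : ℝ) ≤ L / (2 * w * m) + 1 := by
  rw [← Finset.card_image_of_injective S (Nat.cast_injective (R := ℤ))]
  refine Int.card_le_of_sub_le (by positivity) ?_
  simp only [mem_image]
  rintro _ ⟨a, ha, rfl⟩ _ ⟨b, hb, rfl⟩ hab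
  have hab : (a : ℝ) ≤ b := by exact_mod_cast hab.le
  obtain ⟨hwa, hαa, -⟩ := hS a ha
  obtain ⟨-, -, hbL⟩ := hS b hb
  push_cast
  rw [le_div_iff₀ (by positivity)]
  -- `(b - a) (2 w) ≤ (b - a) (b + a)` and `(b² - a²) m < L`
  nlinarith [mul_le_mul_of_nonneg_left (by linarith : 2 * w ≤ b + a) (sub_nonneg.mpr hab)]

theorem sum_inv_sq_le_of_le {Q : Finset ℕ} {z : ℝ} (hz : 1 < z) (hQ : ∀ q ∈ Q, z ≤ q) :
    ∑ q ∈ Q, ((q : ℝ) ^ 2)⁻¹ ≤ (z - 1)⁻¹ := by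
  set k := ⌈z⌉₊ - 1
  have hk : z - 1 ≤ k := by
    have := Nat.le_ceil z
    have : 1 ≤ ⌈z⌉₊ := Nat.one_le_iff_ne_zero.mpr (by positivity)
    push_cast [k, Nat.cast_sub this]; linarith
  have hk0 : k ≠ 0 := by
    have : 1 < ⌈z⌉₊ := Nat.lt_ceil.mpr (by simpa using hz)
    omega
  have hsub : Q ⊆ Ioc k (k + Q.sup id) := fun q hq =>
    mem_Ioc.mpr ⟨by have := Nat.ceil_le.mpr (hQ q hq); omega, le_add_left (le_sup (f := id) hq)⟩
  calc ∑ q ∈ Q, ((q : ℝ) ^ 2)⁻¹ ≤ ∑ q ∈ Ioc k (k + Q.sup id), ((q : ℝ) ^ 2)⁻¹ :=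
        sum_le_sum_of_subset_of_nonneg hsub fun _ _ _ => by positivity
    _ ≤ (k : ℝ)⁻¹ - ((k + Q.sup id : ℕ) : ℝ)⁻¹ := sum_Ioc_inv_sq_le_sub hk0 (Nat.le_add_right _ _)
    _ ≤ (z - 1)⁻¹ := by
      have : (0:ℝ) ≤ ((k + Q.sup id : ℕ) : ℝ)⁻¹ := by positivity
      have : (k : ℝ)⁻¹ ≤ (z - 1)⁻¹ := inv_anti₀ (by linarith) hk
      linarith

theorem sum_card_filter_sq_dvd_le_of_lt {A : Finset ℤ} {α L : ℝ} (hL : 0 ≤ L)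
    (hA : ∀ a ∈ A, α < a ∧ a < α + L) {Q : Finset ℕ} {z w : ℝ} (hz : 1 < z) (hw : 0 ≤ w)
    (hQ : ∀ q ∈ Q, z ≤ q ∧ (q : ℝ) < w) :
    ∑ q ∈ Q, (#{a ∈ A | (q : ℤ) ^ 2 ∣ a} : ℝ) ≤ L / (z - 1) + (w + 1) := by
  have hcard : ∀ q ∈ Q, (#{a ∈ A | (q : ℤ) ^ 2 ∣ a} : ℝ) ≤ L * ((q : ℝ) ^ 2)⁻¹ + 1 := by
    intro q hq
    have hq : 0 < q := by exact_mod_cast (hz.trans_le (hQ q hq).1 |>.trans' one_pos)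
    have := Int.card_filter_dvd_le hL hA (d := (q : ℤ) ^ 2) (by positivity)
    push_cast at this
    rwa [div_eq_mul_inv] at this
  have hQw : #Q ≤ ⌈w⌉₊ := by
    simpa using card_le_card fun q hq => mem_range.mpr (Nat.lt_ceil.mpr (hQ q hq).2)
  calc ∑ q ∈ Q, (#{a ∈ A | (q : ℤ) ^ 2 ∣ a} : ℝ)
      ≤ ∑ q ∈ Q, (L * ((q : ℝ) ^ 2)⁻¹ + 1) := sum_le_sum hcard
    _ = L * ∑ q ∈ Q, ((q : ℝ) ^ 2)⁻¹ + #Q := by simp [sum_add_distrib, mul_sum]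
    _ ≤ L * (z - 1)⁻¹ + (w + 1) := by
      gcongr
      · exact sum_inv_sq_le_of_le hz fun q hq => (hQ q hq).1
      · exact (Nat.cast_le.mpr hQw).trans (Nat.ceil_lt_add_one hw).le

theorem sum_card_filter_sq_dvd_le_of_le {A : Finset ℤ} {α L : ℝ} (hα : 0 ≤ α) (hL : 0 ≤ L)
    (hA : ∀ a ∈ A, α < a ∧ a < α + L) {Q : Finset ℕ} {w : ℝ} (hw : 0 < w)
    (hQ : ∀ q ∈ Q, w ≤ q) :
    ∑ q ∈ Q, (#{a ∈ A | (q : ℤ) ^ 2 ∣ a} : ℝ) ≤ (α + L) / w ^ 2 * (L / (2 * w) + 1) := by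
  set M := Icc (1 : ℤ) ⌊(α + L) / w ^ 2⌋
  have hM : (#M : ℝ) ≤ (α + L) / w ^ 2 := by
    have h0 : 0 ≤ ⌊(α + L) / w ^ 2⌋ := Int.floor_nonneg.mpr (by positivity)
    rw [Int.card_Icc, add_sub_cancel_right, ← Int.cast_natCast, Int.toNat_of_nonneg h0]
    exact Int.floor_le _
  -- every `a ∈ A` divisible by `q²` is `q² m` with `1 ≤ m ≤ (α + L) / w²`
  have hcofactor : ∀ q ∈ Q, #{a ∈ A | (q : ℤ) ^ 2 ∣ a} ≤ #{m ∈ M | (q : ℤ) ^ 2 * m ∈ A} := by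
    intro q hq
    have hwq : w ^ 2 ≤ (q : ℝ) ^ 2 := pow_le_pow_left₀ hw.le (hQ q hq) 2
    refine (card_le_card (t := M.filter _ |>.image ((q : ℤ) ^ 2 * ·)) fun a ha => ?_).trans
      card_image_le
    obtain ⟨ha, m, rfl⟩ := mem_filter.mp ha
    obtain ⟨hαa, haL⟩ := hA _ ha
    push_cast at hαa haL
    have hm : (0 : ℝ) < m := pos_of_mul_pos_right (hα.trans_lt hαa) (by positivity)
    refine mem_image.mpr ⟨m, mem_filter.mpr ⟨mem_Icc.mpr ⟨?_, ?_⟩, ha⟩, rfl⟩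
    · exact_mod_cast hm
    · rw [Int.le_floor, le_div_iff₀ (by positivity)]
      nlinarith
  have hcount : ∀ m ∈ M, (#{q ∈ Q | ((q : ℕ) : ℤ) ^ 2 * m ∈ A} : ℝ) ≤ L / (2 * w) + 1 := by
    intro m hm
    have hm : (1 : ℝ) ≤ m := by exact_mod_cast (mem_Icc.mp hm).1
    refine (Nat.card_sq_mul_mem_Ioo_le (α := α) hL hw (one_pos.trans_le hm) fun q hq => ?_).trans ?_
    · obtain ⟨hq, hqm⟩ := mem_filter.mp hq
      have := hA _ hqm
      push_cast at this
      exact ⟨hQ q hq, this⟩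
    · gcongr L / ?_ + 1
      exact le_mul_of_one_le_right (by positivity) hm
  calc ∑ q ∈ Q, (#{a ∈ A | (q : ℤ) ^ 2 ∣ a} : ℝ)
      ≤ ∑ q ∈ Q, (#{m ∈ M | (q : ℤ) ^ 2 * m ∈ A} : ℝ) :=
        sum_le_sum fun q hq => by exact_mod_cast hcofactor q hq
    _ = ∑ m ∈ M, (#{q ∈ Q | ((q : ℕ) : ℤ) ^ 2 * m ∈ A} : ℝ) := by
        rw [← Nat.cast_sum, ← Nat.cast_sum]
        exact congrArg _ (sum_card_bipartiteAbove_eq_sum_card_bipartiteBelow _)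
    _ ≤ #M * (L / (2 * w) + 1) := by
        simpa [mul_add] using sum_le_sum hcount
    _ ≤ (α + L) / w ^ 2 * (L / (2 * w) + 1) := by gcongr

theorem sum_card_filter_sq_dvd_le_of_pow {t : ℝ} (ht : 2 ≤ t) {A : Finset ℤ}
    (hA : ∀ a ∈ A, t ^ 75 < a ∧ a < t ^ 75 + 3 * t ^ 50) {Q : Finset ℕ}
    (hQ : ∀ q ∈ Q, t ^ 15 ≤ q) :
    ∑ q ∈ Q, (#{a ∈ A | (q : ℤ) ^ 2 ∣ a} : ℝ) ≤ 13 * t ^ 35 := by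
  have ht0 : 0 < t := by linarith
  have ht15 : 2 ≤ t ^ 15 := ht.trans (le_self_pow₀ (by linarith) (by norm_num))
  have ht25 : 3 ≤ t ^ 25 := by linarith [pow_le_pow_left₀ (by norm_num) ht 25]
  rw [← sum_filter_add_sum_filter_not Q (fun q => (q : ℝ) < t ^ 30)]
  refine (add_le_add
    (sum_card_filter_sq_dvd_le_of_lt (by positivity) hA (z := t ^ 15) (by linarith) (by positivity)
      fun q hq => ⟨hQ q (mem_filter.mp hq).1, (mem_filter.mp hq).2⟩)
    (sum_card_filter_sq_dvd_le_of_le (by positivity) (by positivity) hA (by positivity)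
      fun q hq => not_lt.mp (mem_filter.mp hq).2)).trans ?_
  have h1 : 3 * t ^ 50 / (t ^ 15 - 1) ≤ 6 * t ^ 35 := by
    rw [div_le_iff₀ (by linarith)]
    linear_combination (3 * t ^ 35) * ht15
  have h2 : (t ^ 75 + 3 * t ^ 50) / (t ^ 30) ^ 2 ≤ 2 * t ^ 15 := by
    rw [div_le_iff₀ (by positivity)]
    linear_combination (t ^ 50) * ht25
  have h3 : 3 * t ^ 50 / (2 * t ^ 30) = 3 / 2 * t ^ 20 := by
    field_simp
  have h4 : t ^ 30 + 2 * t ^ 15 + 1 ≤ 4 * t ^ 35 := by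
    have := pow_le_pow_right₀ (by linarith : 1 ≤ t) (by norm_num : 30 ≤ 35)
    have := pow_le_pow_right₀ (by linarith : 1 ≤ t) (by norm_num : 15 ≤ 35)
    have := one_le_pow₀ (by linarith : 1 ≤ t) (n := 35)
    linarith
  rw [h3]
  have h5 := mul_le_mul_of_nonneg_right h2 (by positivity : 0 ≤ 3 / 2 * t ^ 20 + 1)
  linear_combination h1 + h5 + h4

theorem thousand_le_pow_six {t : ℝ} (ht0 : 0 ≤ t) (ht : (10 : ℝ) ^ 40 ≤ t ^ 75) :
    1000 ≤ t ^ 6 := by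
  by_contra! h
  have ht4 : t < 4 := by
    by_contra! h4
    linarith [pow_le_pow_left₀ (by norm_num) h4 6]
  have : t ^ 75 < 10 ^ 40 := calc
    t ^ 75 = (t ^ 6) ^ 12 * t ^ 3 := by ring
    _ < 1000 ^ 12 * 4 ^ 3 := by gcongr
    _ < 10 ^ 40 := by norm_num
  linarith

open Classical in
theorem sum_card_div_sq_le_general (N : ℤ) (hN : (10 : ℤ) ^ 40 ≤ N)
    (A : Finset ℤ)
    (hA : ∀ a : ℤ, a ∈ A ↔ (N : ℝ) < (a : ℝ) ∧
        (a : ℝ) < (N : ℝ) + 3 * (N : ℝ) ^ ((2 : ℝ) / 3))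
    (X : ℤ) (hXA : X ∈ A)
    (z y : ℝ) (hz : z = (X : ℝ) ^ ((1 : ℝ) / 5)) :
    ∑ q ∈ (Finset.range ⌈y⌉₊).filter
        (fun q => Nat.Prime q ∧ z ≤ (q : ℝ) ∧ (q : ℝ) < y),
        ((A.filter (fun a => (q : ℤ) ^ 2 ∣ a)).card : ℝ) ≤
      0.03 * (A.card : ℝ) ^ (0.82 : ℝ) := by
  set t := (N : ℝ) ^ ((1 : ℝ) / 75)
  have hN0 : (0 : ℝ) ≤ N := by positivity
  have ht0 : 0 ≤ t := by positivity
  have hN75 : (N : ℝ) = t ^ 75 := by rw [← rpow_mul_natCast hN0]; norm_num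
  have hN23 : (N : ℝ) ^ ((2 : ℝ) / 3) = t ^ 50 := by rw [← rpow_mul_natCast hN0]; norm_num
  have ht : 1000 ≤ t ^ 6 := thousand_le_pow_six ht0 (by rw [← hN75]; exact_mod_cast hN)
  have ht2 : 2 ≤ t := by
    by_contra! h
    linarith [pow_lt_pow_left₀ h ht0 (by norm_num : 6 ≠ 0)]
  have hzt : t ^ 15 ≤ z := by
    have hX : (N : ℝ) ≤ X := ((hA X).mp hXA).1.le
    rw [hz, ← rpow_mul_natCast hN0]
    exact (rpow_le_rpow hN0 hX (by norm_num)).trans_eq' (by norm_num)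
  have hcard : t ^ 50 ≤ #A := by
    have := Int.sub_one_le_card_of_forall_mem (L := 3 * t ^ 50) fun a h1 h2 =>
      (hA a).mpr ⟨h1, hN23 ▸ h2⟩
    linarith [one_le_pow₀ (n := 50) (by linarith : 1 ≤ t)]
  calc _ ≤ 13 * t ^ 35 := sum_card_filter_sq_dvd_le_of_pow ht2
        (fun a ha => by rw [← hN75, ← hN23]; exact (hA a).mp ha)
        fun q hq => hzt.trans (mem_filter.mp hq).2.2.1
    _ ≤ 0.03 * t ^ 41 := by nlinarith [pow_nonneg ht0 35]
    _ = 0.03 * (t ^ 50) ^ (0.82 : ℝ) := by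
      rw [← rpow_natCast t 50, ← rpow_mul ht0, ← rpow_natCast]; norm_num
    _ ≤ 0.03 * (#A : ℝ) ^ (0.82 : ℝ) := by gcongr

open Classical in
theorem sum_card_div_sq_le (N : ℤ) (hN : (10 : ℤ) ^ 40 ≤ N)
    (A : Finset ℤ)
    (hA : ∀ a : ℤ, a ∈ A ↔ (N : ℝ) < (a : ℝ) ∧
        (a : ℝ) < (N : ℝ) + 3 * (N : ℝ) ^ ((2 : ℝ) / 3))
    (X : ℤ) (hXA : X ∈ A) (hXmax : ∀ a ∈ A, a ≤ X)
    (z y : ℝ) (hz : z = (X : ℝ) ^ ((1 : ℝ) / 5))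
    (hy : y = (X : ℝ) ^ ((1 : ℝ) / 1.85)) :
    ∑ q ∈ (Finset.range ⌈y⌉₊).filter
        (fun q => Nat.Prime q ∧ z ≤ (q : ℝ) ∧ (q : ℝ) < y),
        ((A.filter (fun a => (q : ℤ) ^ 2 ∣ a)).card : ℝ) ≤
      0.03 * (A.card : ℝ) ^ (0.82 : ℝ) :=
  sum_card_div_sq_le_general N hN A hA X hXA z y hz
end

section
/- For every a ∈ A' with gcd(a, P(z)) = 1, Richert's weight satisfies w(a) ≤ λ − Ω(a) + k₂·(log a)/(log X), where Ω counts prime factors with multiplicity. -/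
open Real Finset
open scoped ArithmeticFunction.Omega

/-! With `ℓ p = log p / log y`, one has `Ω(a) - log a / log y = ∑_{p ^ ν ∥ a} ν (1 - ℓ p)`.
Primes below `z` do not divide `a`; those in `[z, y)` divide it exactly once and contribute
precisely the terms of the weight; those `≥ y` have `1 - ℓ p ≤ 0`. Finally
`log y = log X / k₂` turns `log a / log y` into `k₂ log a / log X`. -/

theorem cardFactors_sub_log_div_eq_sum (n : ℕ) (L : ℝ) :
    (Ω n : ℝ) - log n / L =
      ∑ p ∈ n.primeFactors, (n.factorization p : ℝ) * (1 - log p / L) := by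
  rw [ArithmeticFunction.cardFactors_eq_sum_factorization, log_nat_eq_sum_factorization]
  simp only [Finsupp.sum, Nat.support_factorization, Nat.cast_sum, sum_div, ← sum_sub_distrib]
  refine sum_congr rfl fun p _ => ?_
  ring

theorem cardFactors_sub_log_div_le_sum_filter {n : ℕ} {L : ℝ} (q : ℕ → Prop) [DecidablePred q]
    (hsimple : ∀ p ∈ n.primeFactors, q p → n.factorization p = 1)
    (hlarge : ∀ p ∈ n.primeFactors, ¬ q p → 1 ≤ log p / L) :
    (Ω n : ℝ) - log n / L ≤ ∑ p ∈ n.primeFactors.filter q, (1 - log p / L) := by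
  rw [cardFactors_sub_log_div_eq_sum, ← sum_filter_add_sum_filter_not _ q]
  have hsimple_sum : ∑ p ∈ n.primeFactors.filter q, (n.factorization p : ℝ) * (1 - log p / L) =
      ∑ p ∈ n.primeFactors.filter q, (1 - log p / L) := by
    refine sum_congr rfl fun p hp => ?_
    rw [mem_filter] at hp
    simp [hsimple p hp.1 hp.2]
  have hlarge_sum : ∑ p ∈ n.primeFactors.filter (¬ q ·),
      (n.factorization p : ℝ) * (1 - log p / L) ≤ 0 := by
    refine sum_nonpos fun p hp => ?_
    rw [mem_filter] at hp
    exact mul_nonpos_of_nonneg_of_nonpos (Nat.cast_nonneg _) (by linarith [hlarge p hp.1 hp.2])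
  linarith

theorem Nat.factorization_eq_one_of_not_sq_dvd {n p : ℕ} (hp : p ∈ n.primeFactors)
    (hsq : ¬ p ^ 2 ∣ n) : n.factorization p = 1 := by
  obtain ⟨hprime, -, hn⟩ := Nat.mem_primeFactors.1 hp
  have hne : n.factorization p ≠ 0 := Finsupp.mem_support_iff.1 hp
  have hlt : n.factorization p < 2 :=
    not_le.1 fun h => hsq ((hprime.pow_dvd_iff_le_factorization hn).2 h)
  omega

open Classical in
theorem richert_weight_pointwise_bound_general
    (A : Finset ℕ) (hApos : ∀ a ∈ A, 0 < a) (hne : A.Nonempty)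
    (P : Set ℕ) (hP : P = {p : ℕ | Nat.Prime p})
    (k₂ : ℝ) (hk₂ : 1 ≤ k₂)
    (X z y lam : ℝ)
    (hX : X = (A.max' hne : ℝ))
    (hy : y = X ^ (1 / k₂))
    (w : ℕ → ℝ)
    (hw : ∀ b : ℕ, w b = lam -
      ∑ p ∈ b.primeFactors.filter (fun p => p ∈ P ∧ z ≤ (p : ℝ) ∧ (p : ℝ) < y),
        (1 - Real.log p / Real.log y))
    (a : ℕ) (haA : a ∈ A)
    (hsq : ∀ p : ℕ, Nat.Prime p → p ∈ P → z ≤ (p : ℝ) → (p : ℝ) < y → ¬ p ^ 2 ∣ a)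
    (hcop : ∀ p : ℕ, Nat.Prime p → p ∈ P → (p : ℝ) < z → ¬ p ∣ a) :
    w a ≤ lam - (a.primeFactorsList.length : ℝ) +
      k₂ * Real.log a / Real.log X := by
  have haX : (a : ℝ) ≤ X := hX ▸ mod_cast A.le_max' a haA
  have hX0 : 0 < X := lt_of_lt_of_le (mod_cast hApos a haA) haX
  have hlogy : log y = log X / k₂ := by rw [hy, log_rpow hX0]; ring
  have hratio : k₂ * log a / log X = log a / log y := by
    rw [hlogy, div_div_eq_mul_div, mul_comm]
  have hmemP : ∀ p ∈ a.primeFactors, p ∈ P := fun p hp => hP ▸ Nat.prime_of_mem_primeFactors hp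
  have hzle : ∀ p ∈ a.primeFactors, z ≤ p := fun p hp => not_lt.1 fun hpz =>
    hcop p (Nat.prime_of_mem_primeFactors hp) (hmemP p hp) hpz (Nat.dvd_of_mem_primeFactors hp)
  have hsimple : ∀ p ∈ a.primeFactors, (p ∈ P ∧ z ≤ p ∧ (p : ℝ) < y) →
      a.factorization p = 1 := fun p hp ⟨hpP, hpz, hpy⟩ =>
    Nat.factorization_eq_one_of_not_sq_dvd hp
      (hsq p (Nat.prime_of_mem_primeFactors hp) hpP hpz hpy)
  have hlarge : ∀ p ∈ a.primeFactors, ¬ (p ∈ P ∧ z ≤ p ∧ (p : ℝ) < y) →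
      1 ≤ log p / log y := by
    intro p hp hwindow
    have hyp : y ≤ p := not_lt.1 fun hpy =>
      hwindow ⟨hmemP p hp, hzle p hp, hpy⟩
    have hX1 : 1 < X := calc
      (1 : ℝ) < p := mod_cast (Nat.prime_of_mem_primeFactors hp).one_lt
      _ ≤ a := mod_cast Nat.le_of_mem_primeFactors hp
      _ ≤ X := haX
    have hlogy0 : 0 < log y := by rw [hlogy]; exact div_pos (log_pos hX1) (by linarith)
    exact (one_le_div hlogy0).2 (log_le_log (hy ▸ rpow_pos_of_pos hX0 _) hyp)
  rw [hw a, hratio, ← ArithmeticFunction.cardFactors_apply]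
  linarith [cardFactors_sub_log_div_le_sum_filter _ hsimple hlarge]

open Classical in
theorem richert_weight_pointwise_bound
    (A : Finset ℕ) (hApos : ∀ a ∈ A, 0 < a) (hne : A.Nonempty)
    (P : Set ℕ) (hP : P = {p : ℕ | Nat.Prime p})
    (k₁ k₂ : ℝ) (hk₂ : 1 ≤ k₂) (hk₁₂ : k₂ ≤ k₁)
    (X z y lam : ℝ)
    (hX : X = (A.max' hne : ℝ))
    (hz : z = X ^ (1 / k₁)) (hy : y = X ^ (1 / k₂))
    (w : ℕ → ℝ)
    (hw : ∀ b : ℕ, w b = lam -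
      ∑ p ∈ b.primeFactors.filter (fun p => p ∈ P ∧ z ≤ (p : ℝ) ∧ (p : ℝ) < y),
        (1 - Real.log p / Real.log y))
    (a : ℕ) (haA : a ∈ A)
    (hsq : ∀ p : ℕ, Nat.Prime p → p ∈ P → z ≤ (p : ℝ) → (p : ℝ) < y → ¬ p ^ 2 ∣ a)
    (hcop : ∀ p : ℕ, Nat.Prime p → p ∈ P → (p : ℝ) < z → ¬ p ∣ a) :
    w a ≤ lam - (a.primeFactorsList.length : ℝ) +
      k₂ * Real.log a / Real.log X :=
  richert_weight_pointwise_bound_general A hApos hne P hP k₂ hk₂ X z y lam hX hy w hw a haA hsq hcop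
end
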